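/- arXiv:2605.19569 — 4 statements merged into one kernel-verified Lean document; each statement's English description precedes it below -/
import Mathlib

section
/- Let S be a finite semigroup and φ : S → G a relational morphism to a finite group G (i.e., φ(s) ⊆ G is nonempty for all s and φ(s)φ(t) ⊆ φ(st)). Then the preimage of the identity, 1φ⁻¹ = {s ∈ S : 1 ∈ φ(s)}, contains every idempotent of S and is closed under multiplication and under weak conjugation; hence S_II ⊆ 1φ⁻¹. -/
open Pointwise

/-- The type II subsemigroup `S_II`: the smallest subset of `S` containing all
idempotents, closed under multiplication, and closed under weak conjugation. -/
inductive TypeII {S : Type*} [Semigroup S] : S → Prop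
  | idem : ∀ e : S, e * e = e → TypeII e
  | mul : ∀ a b : S, TypeII a → TypeII b → TypeII (a * b)
  | conjL : ∀ x y s : S, x * y * x = x → TypeII s → TypeII (x * s * y)
  | conjR : ∀ x y s : S, x * y * x = x → TypeII s → TypeII (y * s * x)

private lemma pow_mem_of_idem' {S G : Type*} [Semigroup S] [Group G] (φ : S → Set G)
    (hrel : ∀ s t : S, φ s * φ t ⊆ φ (s * t))
    {e : S} (he : e * e = e) {g : G} (hg : g ∈ φ e) :
    ∀ k : ℕ, g ^ (k + 1) ∈ φ e := by
  intro k
  induction k with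
  | zero => simpa using hg
  | succ k ih =>
    have h := hrel e e (Set.mul_mem_mul ih hg)
    rw [he] at h
    simpa [pow_succ] using h

/-- If `φ : S → G` is a relational morphism from a finite semigroup to a finite
group, then `1φ⁻¹` contains all idempotents, is closed under multiplication and
weak conjugation; hence `S_II ⊆ 1φ⁻¹`. -/
theorem typeII_subset_inverse_one {S G : Type*} [Semigroup S] [Fintype S]
    [Group G] [Fintype G] (φ : S → Set G)
    (hne : ∀ s : S, (φ s).Nonempty)
    (hrel : ∀ s t : S, φ s * φ t ⊆ φ (s * t)) :
    (∀ e : S, e * e = e → (1 : G) ∈ φ e) ∧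
    (∀ s t : S, (1 : G) ∈ φ s → (1 : G) ∈ φ t → (1 : G) ∈ φ (s * t)) ∧
    (∀ x y s : S, x * y * x = x → (1 : G) ∈ φ s →
      (1 : G) ∈ φ (x * s * y) ∧ (1 : G) ∈ φ (y * s * x)) ∧
    (∀ s : S, TypeII s → (1 : G) ∈ φ s) := by
  have idem1 : ∀ e : S, e * e = e → (1 : G) ∈ φ e := by
    intro e he
    obtain ⟨g, hg⟩ := hne e
    have h := pow_mem_of_idem' φ hrel he hg (orderOf g - 1)
    have hn : orderOf g - 1 + 1 = orderOf g := Nat.succ_pred_eq_of_pos (orderOf_pos g)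
    rw [hn, pow_orderOf_eq_one] at h
    exact h
  have mul1 : ∀ s t : S, (1 : G) ∈ φ s → (1 : G) ∈ φ t → (1 : G) ∈ φ (s * t) := by
    intro s t hs ht
    simpa using hrel s t (Set.mul_mem_mul hs ht)
  have inv_mem : ∀ e : S, e * e = e → ∀ a : G, a ∈ φ e → a⁻¹ ∈ φ e := by
    intro e he a ha
    have hpos := orderOf_pos a
    have h1 := pow_mem_of_idem' φ hrel he ha (2 * orderOf a - 2)
    have heq : 2 * orderOf a - 2 + 1 = 2 * orderOf a - 1 := by omega
    rw [heq] at h1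
    have h2 : a ^ (2 * orderOf a - 1) = a⁻¹ := by
      apply eq_inv_of_mul_eq_one_left
      have h3 : a ^ (2 * orderOf a - 1) * a = a ^ (orderOf a * 2) := by
        rw [← pow_succ]; congr 1; omega
      rw [h3, pow_mul, pow_orderOf_eq_one, one_pow]
    rw [h2] at h1
    exact h1
  have conj : ∀ x y s : S, x * y * x = x → (1 : G) ∈ φ s →
      (1 : G) ∈ φ (x * s * y) ∧ (1 : G) ∈ φ (y * s * x) := by
    intro x y s hxyx hs
    obtain ⟨g, hg⟩ := hne x
    obtain ⟨h, hh⟩ := hne y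
    have hxy : (x * y) * (x * y) = x * y := by rw [← mul_assoc, hxyx]
    have hx2 : x * (y * x) = x := by rw [← mul_assoc, hxyx]
    have hyx : (y * x) * (y * x) = y * x := by rw [mul_assoc y x (y * x), hx2]
    have hghmem : g * h ∈ φ (x * y) := hrel x y (Set.mul_mem_mul hg hh)
    have hhgmem : h * g ∈ φ (y * x) := hrel y x (Set.mul_mem_mul hh hg)
    have hL : g * 1 * h ∈ φ (x * s * y) :=
      hrel _ y (Set.mul_mem_mul (hrel x s (Set.mul_mem_mul hg hs)) hh)
    have hR : h * 1 * g ∈ φ (y * s * x) :=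
      hrel _ x (Set.mul_mem_mul (hrel y s (Set.mul_mem_mul hh hs)) hg)
    constructor
    · have hinv : (g * h)⁻¹ ∈ φ (x * y) := inv_mem _ hxy _ hghmem
      have hm : (g * h)⁻¹ * (g * 1 * h) ∈ φ ((x * y) * (x * s * y)) :=
        hrel _ _ (Set.mul_mem_mul hinv hL)
      have hseq : (x * y) * (x * s * y) = x * s * y := by
        simp only [← mul_assoc]; rw [hxyx]
      rw [hseq] at hm
      simpa [mul_assoc] using hm
    · have hinv : (h * g)⁻¹ ∈ φ (y * x) := inv_mem _ hyx _ hhgmem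
      have hm : (h * 1 * g) * (h * g)⁻¹ ∈ φ ((y * s * x) * (y * x)) :=
        hrel _ _ (Set.mul_mem_mul hR hinv)
      have hseq : (y * s * x) * (y * x) = y * s * x := by
        rw [mul_assoc (y * s) x (y * x), hx2]
      rw [hseq] at hm
      simpa [mul_assoc] using hm
  refine ⟨idem1, mul1, conj, ?_⟩
  intro s hs
  induction hs with
  | idem e he => exact idem1 e he
  | mul a b _ _ iha ihb => exact mul1 a b iha ihb
  | conjL x y t hx _ iht => exact (conj x y t hx iht).1
  | conjR x y t hx _ iht => exact (conj x y t hx iht).2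
end

section
/- With the construction S^Ev as above (generated by t and the h_x, x ∈ S, acting on B^Ev = B × {0,...,n}): any product of generators containing at least two occurrences of elements h_x, h_y (x, y ∈ S) separated by powers of t, namely w = tᵏ h_x tˡ h_y, is either the empty partial function or has image a single point of B^Ev. Specifically, tᵏ h_x tˡ h_y is nonempty iff l ∈ Dom(y) and l ∈ Im(x), and in that case its image is {(ly, 0)}. -/
/-- `G`-labeled partial functions on `Q`. -/
def LPF (Q G : Type*) := Q → Option (Q × G)

/-- Composition (left-to-right) of labeled partial functions. -/
def LPF.mul {Q G : Type*} [Mul G] (f g : LPF Q G) : LPF Q G :=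
  fun q => (f q).bind fun p => (g p.1).map fun r => (r.1, p.2 * r.2)

/-- The identity labeled partial function. -/
def LPF.one {Q G : Type*} [One G] : LPF Q G := fun q => some (q, 1)

/-- Powers of a labeled partial function. -/
def LPF.pow {Q G : Type*} [Monoid G] (f : LPF Q G) : ℕ → LPF Q G
  | 0 => LPF.one
  | k + 1 => LPF.mul (LPF.pow f k) f

variable {n : ℕ} {G : Type*}

/-- The clock `t : (i, j) ↦ (i, j + 1 mod n+1)`, with trivial labels. -/
def tEl [One G] : LPF (Fin n × Fin (n + 1)) G :=
  fun p => some ((p.1, p.2 + 1), 1)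

/-- The generator `h_x` of `S^Ev`. -/
def hEl [Mul G] (x : Fin n → Option (Fin n × G)) : LPF (Fin n × Fin (n + 1)) G :=
  fun p => if p.2 = Fin.succ p.1 then
    (x p.1).map (fun q => ((q.1, (0 : Fin (n + 1))), q.2)) else none

open scoped Fin.NatCast

/-! The clock `t` only shifts the second coordinate, while `h_x` fires on row `i` exactly at clock
`i + 1` and resets the clock to `0`. After `h_x` the power `t^(l+1)` therefore sets the clock to
`l + 1`, so `h_y` can only fire on row `l`; the first `h_x` must land on row `l`, and the result is
`(l y, 0)`. -/

theorem pow_tEl_apply [Monoid G] (k : ℕ) (p : Fin n × Fin (n + 1)) :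
    LPF.pow (tEl (G := G)) k p = some ((p.1, p.2 + k), 1) := by
  induction k with
  | zero => simp [LPF.pow, LPF.one]
  | succ k ih => simp [LPF.pow, LPF.mul, ih, tEl, add_assoc]

theorem tk_hx_tl_hy_eq_some_iff [Monoid G] (k : ℕ) (l : Fin n)
    (x y : Fin n → Option (Fin n × G)) (p : Fin n × Fin (n + 1))
    (q : (Fin n × Fin (n + 1)) × G) :
    LPF.mul (LPF.mul (LPF.mul (LPF.pow (tEl (G := G)) k) (hEl x))
        (LPF.pow (tEl (G := G)) ((l : ℕ) + 1))) (hEl y) p = some q ↔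
      p.2 + k = p.1.succ ∧ ∃ gx m gl, x p.1 = some (l, gx) ∧ y l = some (m, gl) ∧
        q = ((m, 0), gx * gl) := by
  simp only [LPF.mul, pow_tEl_apply, hEl, Nat.cast_add, Nat.cast_one, Fin.coe_eq_castSucc,
    Fin.coeSucc_eq_succ, Option.bind_some]
  split_ifs with hk
  · rcases x p.1 with _ | ⟨a, gx⟩
    · simp
    · by_cases hal : a = l
      · subst hal
        rcases hy : y a with _ | ⟨m, gl⟩ <;> simp [hk, hy, eq_comm]
      · simp [hk, hal, Ne.symm hal]
  · simp [hk]

/-- `l : Fin n` is 0-based, so the paper's power `tˡ` (with `l ∈ B = {1, …, n}`) is `t^(l+1)`. -/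
theorem tk_hx_tl_hy_general [Group G] (k : ℕ) (l : Fin n)
    (x y : Fin n → Option (Fin n × G)) :
    (letI w := LPF.mul (LPF.mul (LPF.mul (LPF.pow (tEl (G := G)) k) (hEl x))
        (LPF.pow (tEl (G := G)) ((l : ℕ) + 1))) (hEl y)
     ((∃ p, w p ≠ none) ↔ (∃ i : Fin n, ∃ g : G, x i = some (l, g)) ∧ y l ≠ none) ∧
     (∀ p q, w p = some q →
        (∃ gl : G, ∃ m : Fin n, y l = some (m, gl) ∧ q.1 = (m, (0 : Fin (n + 1)))) ∧
        (∃ i gx gl m, x i = some (l, gx) ∧ y l = some (m, gl) ∧ q.2 = gx * gl))) := by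
  simp only [ne_eq, ← Option.isSome_iff_ne_none, Option.isSome_iff_exists,
    tk_hx_tl_hy_eq_some_iff]
  refine ⟨⟨?_, ?_⟩, ?_⟩
  · rintro ⟨p, q, -, gx, m, gl, hx, hy, -⟩
    exact ⟨⟨p.1, gx, hx⟩, (m, gl), hy⟩
  · rintro ⟨⟨i, gx, hx⟩, ⟨m, gl⟩, hy⟩
    exact ⟨(i, i.succ - k), _, sub_add_cancel _ _, gx, m, gl, hx, hy, rfl⟩
  · rintro p q ⟨-, gx, m, gl, hx, hy, rfl⟩
    exact ⟨⟨gl, m, hy, rfl⟩, p.1, gx, gl, m, hx, hy, rfl⟩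

/-- The product `tᵏ h_x tˡ h_y` (`l ∈ B`, so the clock power is `l + 1` in our
0-based indexing) is nonempty iff `l ∈ Im(x)` and `l ∈ Dom(y)`, and in that case
its image is the single point `(l y, 0)` with label `g_{i,x} g_{l,y}`. -/
theorem tk_hx_tl_hy [Group G] (hn : 1 ≤ n) (k : ℕ) (l : Fin n)
    (x y : Fin n → Option (Fin n × G)) :
    (letI w := LPF.mul (LPF.mul (LPF.mul (LPF.pow (tEl (G := G)) k) (hEl x))
        (LPF.pow (tEl (G := G)) ((l : ℕ) + 1))) (hEl y)
     ((∃ p, w p ≠ none) ↔ (∃ i : Fin n, ∃ g : G, x i = some (l, g)) ∧ y l ≠ none) ∧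
     (∀ p q, w p = some q →
        (∃ gl : G, ∃ m : Fin n, y l = some (m, gl) ∧ q.1 = (m, (0 : Fin (n + 1)))) ∧
        (∃ i gx gl m, x i = some (l, gx) ∧ y l = some (m, gl) ∧ q.2 = gx * gl))) :=
  tk_hx_tl_hy_general k l x y
end

section
/- Stability of finite semigroups: in a finite semigroup S, if s 𝓙 st then s 𝓡 st, and if s 𝓙 ts then s 𝓛 ts. -/
variable {S : Type*} [Semigroup S]

/-- The right ideal `a S¹`. -/
def rId (a : S) : Set S := insert a {c | ∃ x : S, c = a * x}

/-- The left ideal `S¹ a`. -/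
def lId (a : S) : Set S := insert a {c | ∃ x : S, c = x * a}

/-- The two-sided ideal `S¹ a S¹`. -/
def jId (a : S) : Set S :=
  insert a ({c | ∃ x : S, c = x * a} ∪ {c | ∃ y : S, c = a * y} ∪
    {c | ∃ x y : S, c = x * a * y})

/-- `pw x n = x^(n+1)`. -/
def pw (x : S) : ℕ → S
  | 0 => x
  | n+1 => pw x n * x

lemma pw_succ' (x : S) : ∀ n, pw x (n+1) = x * pw x n := by
  intro n
  induction n with
  | zero => rfl
  | succ n ih => show pw x (n+1) * x = x * (pw x n * x); rw [ih, mul_assoc]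

lemma pw_add (x : S) (m : ℕ) : ∀ n, pw x (m + n + 1) = pw x m * pw x n := by
  intro n
  induction n with
  | zero => rfl
  | succ n ih =>
      show pw x (m + n + 1 + 1) = pw x m * pw x (n+1)
      show pw x (m + n + 1) * x = pw x m * (pw x n * x)
      rw [ih, mul_assoc]

lemma pw_comm (x : S) (m n : ℕ) : pw x m * pw x n = pw x n * pw x m := by
  rw [← pw_add, ← pw_add, Nat.add_comm m n]

lemma key_pow (s x t : S) (h : s = x * s * t) : ∀ n, s = pw x n * s * pw t n := by
  intro n
  induction n with
  | zero => exact h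
  | succ n ih =>
      rw [pw_succ' x n]
      show s = x * pw x n * s * (pw t n * t)
      calc s = x * s * t := h
        _ = x * (pw x n * s * pw t n) * t := by rw [← ih]
        _ = x * pw x n * s * (pw t n * t) := by simp only [mul_assoc]

lemma pigeon (x : S) [Fintype S] : ∃ m k : ℕ, pw x (m + k + 1) = pw x m := by
  obtain ⟨a, b, hab, he⟩ := Finite.exists_ne_map_eq_of_infinite (pw x)
  rcases Nat.lt_or_ge a b with h | h
  · exact ⟨a, b - a - 1, by rw [show a + (b - a - 1) + 1 = b by omega]; exact he.symm⟩
  · have h' : b < a := lt_of_le_of_ne h (fun e => hab e.symm)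
    exact ⟨b, a - b - 1, by rw [show b + (a - b - 1) + 1 = a by omega]; exact he⟩

lemma key_R (s x t : S) [Fintype S] (h : s = x * s * t) : ∃ k, s = s * pw t k := by
  obtain ⟨m, k, hmk⟩ := pigeon x
  refine ⟨k, ?_⟩
  calc s = pw x (m + k + 1) * s * pw t (m + k + 1) := key_pow s x t h _
    _ = pw x m * s * (pw t m * pw t k) := by rw [hmk, pw_add]
    _ = (pw x m * s * pw t m) * pw t k := by simp only [mul_assoc]
    _ = s * pw t k := by rw [← key_pow s x t h m]

lemma key_L (s x t : S) [Fintype S] (h : s = x * s * t) : ∃ k, s = pw x k * s := by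
  obtain ⟨m, k, hmk⟩ := pigeon t
  refine ⟨k, ?_⟩
  calc s = pw x (m + k + 1) * s * pw t (m + k + 1) := key_pow s x t h _
    _ = (pw x m * pw x k) * s * pw t m := by rw [hmk, pw_add]
    _ = (pw x k * pw x m) * s * pw t m := by rw [pw_comm]
    _ = pw x k * (pw x m * s * pw t m) := by simp only [mul_assoc]
    _ = pw x k * s := by rw [← key_pow s x t h m]

lemma rId_eq (s t : S) (hs : s = s * t ∨ ∃ y, s = (s * t) * y) : rId s = rId (s * t) := by
  ext c
  simp only [rId, Set.mem_insert_iff, Set.mem_setOf_eq]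
  constructor
  · rintro (rfl | ⟨y, rfl⟩)
    · rcases hs with h | ⟨y, h⟩
      · exact Or.inl h
      · exact Or.inr ⟨y, h⟩
    · rcases hs with h | ⟨z, h⟩
      · exact Or.inr ⟨y, by rw [← h]⟩
      · exact Or.inr ⟨z * y, by rw [← mul_assoc, ← h]⟩
  · rintro (rfl | ⟨y, rfl⟩)
    · exact Or.inr ⟨t, rfl⟩
    · exact Or.inr ⟨t * y, by rw [mul_assoc]⟩

lemma lId_eq (s t : S) (hs : s = t * s ∨ ∃ y, s = y * (t * s)) : lId s = lId (t * s) := by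
  ext c
  simp only [lId, Set.mem_insert_iff, Set.mem_setOf_eq]
  constructor
  · rintro (rfl | ⟨y, rfl⟩)
    · rcases hs with h | ⟨y, h⟩
      · exact Or.inl h
      · exact Or.inr ⟨y, h⟩
    · rcases hs with h | ⟨z, h⟩
      · exact Or.inr ⟨y, by rw [← h]⟩
      · exact Or.inr ⟨y * z, by rw [mul_assoc, ← h]⟩
  · rintro (rfl | ⟨y, rfl⟩)
    · exact Or.inr ⟨t, rfl⟩
    · exact Or.inr ⟨y * t, by rw [mul_assoc]⟩

/-- Stability of finite semigroups: if `s 𝓙 st` then `s 𝓡 st`, and if `s 𝓙 ts`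
then `s 𝓛 ts`. -/
theorem stability [Fintype S] :
    ∀ s t : S,
      (jId s = jId (s * t) → rId s = rId (s * t)) ∧
      (jId s = jId (t * s) → lId s = lId (t * s)) := by
  intro s t
  constructor
  · intro h
    have hs : s ∈ jId (s * t) := h ▸ Set.mem_insert s _
    simp only [jId, Set.mem_insert_iff, Set.mem_union, Set.mem_setOf_eq] at hs
    apply rId_eq
    rcases hs with h1 | (⟨x, h1⟩ | ⟨y, h1⟩) | ⟨x, y, h1⟩
    · exact Or.inl h1
    · -- s = x * (s*t), so s = x*s*t
      have h2 : s = x * s * t := by rw [mul_assoc]; exact h1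
      obtain ⟨k, hk⟩ := key_R s x t h2
      cases k with
      | zero => exact Or.inl hk
      | succ k =>
          refine Or.inr ⟨pw t k, ?_⟩
          calc s = s * pw t (k+1) := hk
            _ = s * (t * pw t k) := by rw [pw_succ']
            _ = (s * t) * pw t k := by rw [mul_assoc]
    · exact Or.inr ⟨y, h1⟩
    · -- s = x * (s*t) * y = x * s * (t*y)
      have h2 : s = x * s * (t * y) := by
        rw [show x * s * (t * y) = x * (s * t) * y by simp only [mul_assoc]]; exact h1
      obtain ⟨k, hk⟩ := key_R s x (t * y) h2
      cases k with
      | zero => exact Or.inr ⟨y, by rw [mul_assoc]; exact hk⟩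
      | succ k =>
          refine Or.inr ⟨y * pw (t * y) k, ?_⟩
          calc s = s * pw (t * y) (k+1) := hk
            _ = s * ((t * y) * pw (t * y) k) := by rw [pw_succ']
            _ = (s * t) * (y * pw (t * y) k) := by simp only [mul_assoc]
  · intro h
    have hs : s ∈ jId (t * s) := h ▸ Set.mem_insert s _
    simp only [jId, Set.mem_insert_iff, Set.mem_union, Set.mem_setOf_eq] at hs
    apply lId_eq
    rcases hs with h1 | (⟨x, h1⟩ | ⟨y, h1⟩) | ⟨x, y, h1⟩
    · exact Or.inl h1
    · exact Or.inr ⟨x, h1⟩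
    · -- s = (t*s) * y = t * s * y
      have h2 : s = t * s * y := h1
      obtain ⟨k, hk⟩ := key_L s t y h2
      cases k with
      | zero => exact Or.inl hk
      | succ k =>
          refine Or.inr ⟨pw t k, ?_⟩
          calc s = pw t (k+1) * s := hk
            _ = (pw t k * t) * s := rfl
            _ = pw t k * (t * s) := by rw [mul_assoc]
    · -- s = x * (t*s) * y = (x*t) * s * y
      have h2 : s = (x * t) * s * y := by
        rw [show (x * t) * s * y = x * (t * s) * y by simp only [mul_assoc]]; exact h1
      obtain ⟨k, hk⟩ := key_L s (x * t) y h2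
      cases k with
      | zero => exact Or.inr ⟨x, by rw [← mul_assoc]; exact hk⟩
      | succ k =>
          refine Or.inr ⟨pw (x * t) k * x, ?_⟩
          calc s = pw (x * t) (k+1) * s := hk
            _ = (pw (x * t) k * (x * t)) * s := rfl
            _ = (pw (x * t) k * x) * (t * s) := by simp only [mul_assoc]
end

section
/- In a finite monoid M whose set of non-units I = M − U(M) satisfies Iᵏ = I(M) for some k > 0 where I(M) is an ideal that is a 0-simple subsemigroup, every regular 𝓙-class of M is one of: the group of units U(M), I(M) − {0}, or {0}. (Characterization direction of the smallish monoid lemma.) -/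
open Pointwise

variable {M : Type*} [Monoid M]

/-- The 𝓙-class of `s` in a monoid `M`. -/
def jClass (s : M) : Set M :=
  {a | {c | ∃ x y : M, c = x * a * y} = {c | ∃ x y : M, c = x * s * y}}

/-- In a finite monoid, a left inverse is a right inverse. -/
lemma finite_mul_eq_one_comm [Finite M] {a b : M} (h : a * b = 1) : b * a = 1 := by
  have hinj : Function.Injective (fun m : M => b * m) := by
    intro m n hmn
    have hmn' : b * m = b * n := hmn
    have : a * (b * m) = a * (b * n) := by rw [hmn']
    simpa [← mul_assoc, h] using this
  obtain ⟨m, hm⟩ := (Finite.injective_iff_surjective.mp hinj) 1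
  simp only at hm
  have : a = m := by
    calc a = a * (b * m) := by rw [hm, mul_one]
    _ = (a * b) * m := by rw [mul_assoc]
    _ = m := by rw [h, one_mul]
  rw [this, hm]

/-- In a finite monoid, if `x * a * y = 1` then `a` is a unit. -/
lemma finite_isUnit_of_factor [Finite M] {a x y : M} (h : x * a * y = 1) : IsUnit a := by
  have h1 : x * (a * y) = 1 := by rw [← mul_assoc]; exact h
  have h2 : (a * y) * x = 1 := finite_mul_eq_one_comm h1
  have h3 : a * (y * x) = 1 := by rw [← mul_assoc]; exact h2
  have h4 : (y * x) * a = 1 := finite_mul_eq_one_comm h3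
  exact ⟨⟨a, y * x, h3, h4⟩, rfl⟩

/-- Smallish monoid lemma (characterization direction): if the ideal `I` of
non-units of a finite monoid `M` satisfies `Iᵏ = I(M)` for some `k > 0`, where
`I(M)` is an ideal that is a 0-simple subsemigroup with zero `z`, then every
idempotent of `I` lies in `I(M)`, and every regular 𝓙-class of `M` is the group
of units, `I(M) − {z}`, or `{z}`. -/
theorem smallish_regular_J_classes [Fintype M]
    (IM : Set M) (z : M) (hz : z ∈ IM) (hzero : ∀ m : M, m * z = z ∧ z * m = z)
    (hideal : ∀ a ∈ IM, ∀ m : M, m * a ∈ IM ∧ a * m ∈ IM)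
    (h0simple : (∃ a ∈ IM, ∃ b ∈ IM, a * b ≠ z) ∧
      ∀ J : Set M, J ⊆ IM → z ∈ J → (∀ a ∈ J, ∀ b ∈ IM, a * b ∈ J ∧ b * a ∈ J) →
        J = {z} ∨ J = IM)
    (k : ℕ) (hk : 0 < k)
    (hIk : ({s : M | ¬ IsUnit s} : Set M) ^ k = IM) :
    (∀ e : M, ¬ IsUnit e → e * e = e → e ∈ IM) ∧
    (∀ s : M, (∃ u : M, s * u * s = s) →
      jClass s = {a : M | IsUnit a} ∨ jClass s = IM \ {z} ∨ jClass s = {z}) := by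
  -- Part 1: every nonunit idempotent lies in IM.
  have part1 : ∀ e : M, ¬ IsUnit e → e * e = e → e ∈ IM := by
    intro e he hee
    have hpow : ∀ n : ℕ, 0 < n → e ^ n = e := by
      intro n hn
      induction n with
      | zero => omega
      | succ m ih =>
        rcases Nat.eq_zero_or_pos m with hm | hm
        · subst hm; simp
        · rw [pow_succ, ih hm, hee]
    have : e ^ k ∈ ({s : M | ¬ IsUnit s} : Set M) ^ k :=
      Set.pow_mem_pow (show e ∈ {s : M | ¬ IsUnit s} from he)
    rwa [hIk, hpow k hk] at this
  refine ⟨part1, ?_⟩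
  -- The principal two-sided ideal of any nonzero element of IM is IM.
  have key : ∀ a ∈ IM, a ≠ z → {c | ∃ x y : M, c = x * a * y} = IM := by
    intro a ha haz
    set J : Set M := {c | ∃ x y : M, c = x * a * y} with hJ
    have hJsub : J ⊆ IM := by
      rintro c ⟨x, y, rfl⟩
      exact (hideal _ ((hideal a ha x).1) y).2
    have hzJ : z ∈ J := ⟨z, z, by rw [(hzero a).2, (hzero z).1]⟩
    have hJcl : ∀ c ∈ J, ∀ b ∈ IM, c * b ∈ J ∧ b * c ∈ J := by
      rintro c ⟨x, y, rfl⟩ b hb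
      exact ⟨⟨x, y * b, by rw [mul_assoc]⟩, ⟨b * x, y, by simp [mul_assoc]⟩⟩
    rcases h0simple.2 J hJsub hzJ hJcl with h | h
    · exfalso
      have : a ∈ J := ⟨1, 1, by simp⟩
      rw [h] at this
      exact haz this
    · exact h
  -- The ideal of z is {z}.
  have idealz : {c | ∃ x y : M, c = x * z * y} = {z} := by
    apply Set.eq_singleton_iff_unique_mem.mpr
    refine ⟨⟨z, z, by simp [(hzero z).1]⟩, ?_⟩
    rintro c ⟨x, y, rfl⟩
    rw [(hzero x).1, (hzero y).2]
  intro s ⟨u, hu⟩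
  by_cases hs : IsUnit s
  · -- s is a unit: its J-class is the group of units.
    left
    obtain ⟨v, rfl⟩ := hs
    have hideals : {c | ∃ x y : M, c = x * (v : M) * y} = Set.univ := by
      apply Set.eq_univ_of_forall
      intro c
      exact ⟨c * (v⁻¹ : Mˣ), 1, by simp [mul_assoc]⟩
    ext a
    simp only [jClass, Set.mem_setOf_eq]
    constructor
    · intro h
      have h1 : (1 : M) ∈ {c | ∃ x y : M, c = x * a * y} := by
        rw [h, hideals]; trivial
      obtain ⟨x, y, hxy⟩ := h1
      exact finite_isUnit_of_factor hxy.symm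
    · intro ha
      obtain ⟨w, rfl⟩ := ha
      rw [hideals]
      apply Set.eq_univ_of_forall
      intro c
      exact ⟨c * (w⁻¹ : Mˣ), 1, by simp [mul_assoc]⟩
  · -- s is a nonunit: then s ∈ IM.
    have he : ¬ IsUnit (s * u) := by
      intro h
      obtain ⟨w, hw⟩ := h
      apply hs
      have h1 : s * (u * (w⁻¹ : Mˣ)) = 1 := by
        rw [← mul_assoc, ← hw]; simp
      exact ⟨⟨s, u * (w⁻¹ : Mˣ), h1, finite_mul_eq_one_comm h1⟩, rfl⟩
    have hee : (s * u) * (s * u) = s * u := by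
      rw [← mul_assoc, hu]
    have heIM : s * u ∈ IM := part1 _ he hee
    have hsIM : s ∈ IM := by
      have := (hideal _ heIM s).2
      rwa [mul_assoc, ← mul_assoc, hu] at this
    by_cases hsz : s = z
    · -- J-class of z is {z}
      right; right
      subst hsz
      ext a
      simp only [jClass, Set.mem_setOf_eq]
      constructor
      · intro h
        have : a ∈ {c | ∃ x y : M, c = x * a * y} := ⟨1, 1, by simp⟩
        rw [h, idealz] at this
        exact this
      · rintro rfl
        rfl
    · -- s ∈ IM \ {z}: J-class is IM \ {z}
      right; left
      have hIMne : IM ≠ ({z} : Set M) := by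
        intro h
        rw [h] at hsIM
        exact hsz hsIM
      ext a
      simp only [jClass, Set.mem_setOf_eq, Set.mem_diff, Set.mem_singleton_iff]
      constructor
      · intro h
        have haIM : a ∈ IM := by
          have : a ∈ {c | ∃ x y : M, c = x * a * y} := ⟨1, 1, by simp⟩
          rw [h, key s hsIM hsz] at this
          exact this
        refine ⟨haIM, ?_⟩
        rintro rfl
        rw [idealz, key s hsIM hsz] at h
        exact hIMne h.symm
      · rintro ⟨haIM, haz⟩
        rw [key a haIM haz, key s hsIM hsz]
end
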